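/- Let X, Θ, Y be separable real Hilbert spaces, U = X × Θ with norm ‖(x,θ)‖_U² = ‖x‖_X² + ‖θ‖_Θ², and F : U → Y Lipschitz with constant L. Let H be the class of all maps E : U → Y that are Lipschitz with constant at most R and satisfy ‖E(0)‖_Y ≤ B. Let ρ be a Borel probability measure on X with finite second moment, π a Borel probability measure on Θ with finite second moment, and set ν = ρ ⊗ π. Given points θ⁽¹⁾, …, θ⁽ᴺ⁾ ∈ Θ, let π̂_N = (1/N) Σ_{i=1}^N δ_{θ⁽ⁱ⁾} be the empirical measure and ν̂_N = ρ ⊗ π̂_N. Define J_ν(μ) = inf_{E∈H} R_μ(E) + c(μ,ν) · W₂(μ,ν). Then 0 ≤ J_ν(ν̂_N) − inf_{E∈H} R_ν(E) ≤ 2 · c(ν̂_N, ν) · W₂(π̂_N, π). -/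

import Mathlib

open MeasureTheory
open scoped ENNReal NNReal

noncomputable section

/-- The Hilbert norm on the product `U = X × Θ`: `‖(x, θ)‖_U = √(‖x‖² + ‖θ‖²)`. -/
def nU {X Θ : Type*} [NormedAddCommGroup X] [NormedAddCommGroup Θ] (u : X × Θ) : ℝ :=
  Real.sqrt (‖u.1‖ ^ 2 + ‖u.2‖ ^ 2)

/-- The 2-Wasserstein distance associated with a cost function `d`: the infimum over all
couplings `γ` of `μ` and `μ'` (i.e. probability measures on the product whose marginals are
`μ` and `μ'`) of `(∫ d(u,v)² dγ)^{1/2}`. -/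
def W2 {α : Type*} [MeasurableSpace α] (d : α → α → ℝ) (μ μ' : Measure α) : ℝ :=
  sInf { r : ℝ | ∃ γ : Measure (α × α), IsProbabilityMeasure γ ∧
      γ.map Prod.fst = μ ∧ γ.map Prod.snd = μ' ∧
      r = Real.sqrt (∫ p, d p.1 p.2 ^ 2 ∂γ) }

/-- The squared-error risk `R_ν(E) = ∫ ‖F(u) - E(u)‖² dν(u)`. -/
def risk {X Θ Y : Type*} [NormedAddCommGroup X] [NormedAddCommGroup Θ] [NormedAddCommGroup Y]
    [MeasurableSpace X] [MeasurableSpace Θ] (F E : X × Θ → Y) (ν : Measure (X × Θ)) : ℝ :=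
  ∫ u, ‖F u - E u‖ ^ 2 ∂ν

/-- The hypothesis class `H`: all maps `E : U → Y` that are Lipschitz with constant at most
`R₀` (with respect to the Hilbert product norm on `U`) and satisfy `‖E 0‖ ≤ B`. -/
def Hclass {X Θ Y : Type*} [NormedAddCommGroup X] [NormedAddCommGroup Θ] [NormedAddCommGroup Y]
    (R₀ B : ℝ) : Set (X × Θ → Y) :=
  { E | (∀ u v, ‖E u - E v‖ ≤ R₀ * nU (u - v)) ∧ ‖E 0‖ ≤ B }

/-- The constant `c(ν,ν') = C₁² √(2(∫‖u‖_U² dν + ∫‖u‖_U² dν')) + 2 C₁ C₂`, where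
`C₁ = L + R₀` and `C₂ = ‖F 0‖ + B`. -/
def cShift {X Θ Y : Type*} [NormedAddCommGroup X] [NormedAddCommGroup Θ] [NormedAddCommGroup Y]
    [MeasurableSpace X] [MeasurableSpace Θ] (L R₀ B : ℝ) (F : X × Θ → Y)
    (ν ν' : Measure (X × Θ)) : ℝ :=
  (L + R₀) ^ 2 * Real.sqrt (2 * ((∫ u, nU u ^ 2 ∂ν) + ∫ u, nU u ^ 2 ∂ν'))
    + 2 * (L + R₀) * (‖F 0‖ + B)

/-- The bound objective `J(ν) = inf_{E ∈ H} R_ν(E) + c(ν, ν_dep) W₂(ν, ν_dep)`, where the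
Wasserstein distance on `U = X × Θ` is taken with respect to the Hilbert product norm. -/
def Jobj {X Θ Y : Type*} [NormedAddCommGroup X] [NormedAddCommGroup Θ] [NormedAddCommGroup Y]
    [MeasurableSpace X] [MeasurableSpace Θ] (L R₀ B : ℝ) (F : X × Θ → Y)
    (νdep ν : Measure (X × Θ)) : ℝ :=
  sInf ((fun E => risk F E ν) '' Hclass R₀ B)
    + cShift L R₀ B F ν νdep * W2 (fun u v => nU (u - v)) ν νdep

variable {X Θ Y : Type*}
  [NormedAddCommGroup X] [InnerProductSpace ℝ X] [CompleteSpace X]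
  [SecondCountableTopology X] [MeasurableSpace X] [BorelSpace X]
  [NormedAddCommGroup Θ] [InnerProductSpace ℝ Θ] [CompleteSpace Θ]
  [SecondCountableTopology Θ] [MeasurableSpace Θ] [BorelSpace Θ]
  [NormedAddCommGroup Y] [InnerProductSpace ℝ Y] [CompleteSpace Y]
  [SecondCountableTopology Y]

/-! For a fixed emulator `E ∈ H`, the map `f = F - E` is `C₁`-Lipschitz with `‖f 0‖ ≤ C₂`, so
`|‖f v‖² - ‖f u‖²| ≤ (C₁² (‖u‖ + ‖v‖) + 2 C₁ C₂) ‖u - v‖`. Integrating this along a coupling `γ`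
and applying Cauchy–Schwarz bounds `|R_ν(E) - R_ν̂(E)|` by `c(ν̂, ν) (∫ ‖u - v‖² dγ)^{1/2}`, hence
by `c(ν̂, ν) W₂(ν̂, ν)`, uniformly in `E`. The infima of the two risks therefore differ by at most
`c W₂(ν̂, ν)`, which puts `J_ν(ν̂) - inf R_ν` in `[0, 2 c W₂(ν̂, ν)]`. Finally, a coupling of `π̂_N`
and `π` lifts to a coupling of `ρ ⊗ π̂_N` and `ρ ⊗ π` that keeps the `X`-coordinate fixed, so
`W₂(ν̂, ν) ≤ W₂(π̂_N, π)`. -/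

section LipschitzSq

variable {V Y : Type*} [SeminormedAddCommGroup V] [SeminormedAddCommGroup Y]
  {f : V → Y} {K C : ℝ}

lemma norm_le_mul_norm_add_of_norm_sub_le (hf : ∀ u v, ‖f u - f v‖ ≤ K * ‖u - v‖)
    (h0 : ‖f 0‖ ≤ C) (u : V) : ‖f u‖ ≤ K * ‖u‖ + C := by
  have h := hf u 0
  rw [sub_zero] at h
  linarith [norm_le_norm_add_norm_sub' (f u) (f 0)]

lemma continuous_of_norm_sub_le (hf : ∀ u v, ‖f u - f v‖ ≤ K * ‖u - v‖) : Continuous f :=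
  (LipschitzWith.of_dist_le' (by simpa only [dist_eq_norm] using hf)).continuous

lemma abs_norm_sq_sub_norm_sq_le_of_norm_sub_le (hf : ∀ u v, ‖f u - f v‖ ≤ K * ‖u - v‖)
    (h0 : ‖f 0‖ ≤ C) (u v : V) :
    |‖f v‖ ^ 2 - ‖f u‖ ^ 2| ≤ (K ^ 2 * (‖u‖ + ‖v‖) + 2 * K * C) * ‖u - v‖ := by
  have hdiff : |‖f v‖ - ‖f u‖| ≤ K * ‖u - v‖ :=
    (abs_norm_sub_norm_le _ _).trans (by rw [norm_sub_rev]; exact hf u v)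
  have hsum : ‖f v‖ + ‖f u‖ ≤ K * (‖u‖ + ‖v‖) + 2 * C := by
    linarith [norm_le_mul_norm_add_of_norm_sub_le hf h0 u,
      norm_le_mul_norm_add_of_norm_sub_le hf h0 v]
  calc |‖f v‖ ^ 2 - ‖f u‖ ^ 2| = |‖f v‖ - ‖f u‖| * (‖f v‖ + ‖f u‖) := by
        rw [sq_sub_sq, abs_mul, abs_of_nonneg (by positivity), mul_comm]
    _ ≤ K * ‖u - v‖ * (K * (‖u‖ + ‖v‖) + 2 * C) :=
        mul_le_mul hdiff hsum (by positivity) ((abs_nonneg _).trans hdiff)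
    _ = _ := by ring

end LipschitzSq

section Integration

variable {Ω : Type*} [MeasurableSpace Ω] {P : Measure Ω}

lemma integral_mul_le_sqrt_mul_sqrt {g h : Ω → ℝ} (hg0 : 0 ≤ᵐ[P] g) (hh0 : 0 ≤ᵐ[P] h)
    (hg : MemLp g 2 P) (hh : MemLp h 2 P) :
    ∫ ω, g ω * h ω ∂P ≤ √(∫ ω, g ω ^ 2 ∂P) * √(∫ ω, h ω ^ 2 ∂P) := by
  have two : ENNReal.ofReal 2 = 2 := by norm_num
  have := integral_mul_le_Lp_mul_Lq_of_nonneg Real.HolderConjugate.two_two hg0 hh0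
    (two ▸ hg) (two ▸ hh)
  simpa only [Real.rpow_two, ← Real.sqrt_eq_rpow] using this

lemma integral_le_sqrt_integral_sq [IsProbabilityMeasure P] {h : Ω → ℝ} (hh0 : 0 ≤ᵐ[P] h)
    (hh : MemLp h 2 P) : ∫ ω, h ω ∂P ≤ √(∫ ω, h ω ^ 2 ∂P) := by
  simpa using integral_mul_le_sqrt_mul_sqrt hh0 (ae_of_all _ fun _ => zero_le_one) hh
    (memLp_const (1 : ℝ))

end Integration

section Coupling

variable {Ω V Y : Type*} [MeasurableSpace Ω] {P : Measure Ω} [IsProbabilityMeasure P]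
  [NormedAddCommGroup V] [NormedAddCommGroup Y] {f : V → Y} {K C : ℝ}

lemma integrable_norm_sq_comp_of_norm_sub_le (hf : ∀ u v, ‖f u - f v‖ ≤ K * ‖u - v‖)
    (h0 : ‖f 0‖ ≤ C) {Z : Ω → V} (hZ : MemLp Z 2 P) :
    Integrable (fun ω => ‖f (Z ω)‖ ^ 2) P := by
  have hmeas := (continuous_of_norm_sub_le hf).comp_aestronglyMeasurable hZ.1
  refine (memLp_two_iff_integrable_sq_norm hmeas).1
    (((hZ.norm.const_mul K).add (memLp_const C)).of_le hmeas (ae_of_all _ fun ω => ?_))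
  exact (norm_le_mul_norm_add_of_norm_sub_le hf h0 _).trans (le_abs_self _)

theorem abs_integral_norm_sq_comp_sub_le (hf : ∀ u v, ‖f u - f v‖ ≤ K * ‖u - v‖)
    (h0 : ‖f 0‖ ≤ C) (hK : 0 ≤ K) {Z₁ Z₂ : Ω → V} (hZ₁ : MemLp Z₁ 2 P) (hZ₂ : MemLp Z₂ 2 P) :
    |∫ ω, ‖f (Z₂ ω)‖ ^ 2 ∂P - ∫ ω, ‖f (Z₁ ω)‖ ^ 2 ∂P| ≤
      (K ^ 2 * √(2 * (∫ ω, ‖Z₁ ω‖ ^ 2 ∂P + ∫ ω, ‖Z₂ ω‖ ^ 2 ∂P)) + 2 * K * C) *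
        √(∫ ω, ‖Z₁ ω - Z₂ ω‖ ^ 2 ∂P) := by
  set A : Ω → ℝ := fun ω => ‖Z₁ ω‖ + ‖Z₂ ω‖
  set D : Ω → ℝ := fun ω => ‖Z₁ ω - Z₂ ω‖
  have hA : MemLp A 2 P := hZ₁.norm.add hZ₂.norm
  have hD : MemLp D 2 P := (hZ₁.sub hZ₂).norm
  have hA0 : 0 ≤ᵐ[P] A := ae_of_all _ fun ω => by positivity
  have hD0 : 0 ≤ᵐ[P] D := ae_of_all _ fun ω => norm_nonneg _
  have hC : 0 ≤ C := (norm_nonneg _).trans h0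
  have hAD : Integrable (fun ω => A ω * D ω) P := hA.integrable_mul hD
  have hDi : Integrable D P := hD.integrable one_le_two
  have hm₁ := hZ₁.integrable_norm_pow two_ne_zero
  have hm₂ := hZ₂.integrable_norm_pow two_ne_zero
  have hA2 : ∫ ω, A ω ^ 2 ∂P ≤ 2 * (∫ ω, ‖Z₁ ω‖ ^ 2 ∂P + ∫ ω, ‖Z₂ ω‖ ^ 2 ∂P) := by
    rw [← integral_add hm₁ hm₂, ← integral_const_mul]
    exact integral_mono hA.integrable_sq ((hm₁.add hm₂).const_mul 2) fun ω => by
      nlinarith [sq_nonneg (‖Z₁ ω‖ - ‖Z₂ ω‖)]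
  have hf₁ := integrable_norm_sq_comp_of_norm_sub_le hf h0 hZ₁
  have hf₂ := integrable_norm_sq_comp_of_norm_sub_le hf h0 hZ₂
  calc |∫ ω, ‖f (Z₂ ω)‖ ^ 2 ∂P - ∫ ω, ‖f (Z₁ ω)‖ ^ 2 ∂P|
      = |∫ ω, (‖f (Z₂ ω)‖ ^ 2 - ‖f (Z₁ ω)‖ ^ 2) ∂P| := by rw [integral_sub hf₂ hf₁]
    _ ≤ ∫ ω, |‖f (Z₂ ω)‖ ^ 2 - ‖f (Z₁ ω)‖ ^ 2| ∂P := abs_integral_le_integral_abs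
    _ ≤ ∫ ω, (K ^ 2 * (A ω * D ω) + 2 * K * C * D ω) ∂P :=
        integral_mono (hf₂.sub hf₁).abs ((hAD.const_mul _).add (hDi.const_mul _)) fun ω =>
          (abs_norm_sq_sub_norm_sq_le_of_norm_sub_le hf h0 _ _).trans_eq (by ring)
    _ = K ^ 2 * ∫ ω, A ω * D ω ∂P + 2 * K * C * ∫ ω, D ω ∂P := by
        rw [integral_add (hAD.const_mul _) (hDi.const_mul _), integral_const_mul,
          integral_const_mul]
    _ ≤ K ^ 2 * (√(∫ ω, A ω ^ 2 ∂P) * √(∫ ω, D ω ^ 2 ∂P)) +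
          2 * K * C * √(∫ ω, D ω ^ 2 ∂P) := by
        gcongr
        exacts [integral_mul_le_sqrt_mul_sqrt hA0 hD0 hA hD, integral_le_sqrt_integral_sq hD0 hD]
    _ ≤ K ^ 2 * (√(2 * (∫ ω, ‖Z₁ ω‖ ^ 2 ∂P + ∫ ω, ‖Z₂ ω‖ ^ 2 ∂P)) * √(∫ ω, D ω ^ 2 ∂P)) +
          2 * K * C * √(∫ ω, D ω ^ 2 ∂P) := by gcongr
    _ = _ := by ring

end Coupling

section Marginals

variable {β α : Type*} [MeasurableSpace β] [MeasurableSpace α] {γ : Measure β} {μ : Measure α}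
  {g : β → α} {φ : α → ℝ}

lemma integral_comp_of_map_eq (hg : Measurable g) (h : γ.map g = μ)
    (hφ : AEStronglyMeasurable φ μ) : ∫ x, φ (g x) ∂γ = ∫ a, φ a ∂μ := by
  subst h
  exact (integral_map hg.aemeasurable hφ).symm

lemma integrable_comp_of_map_eq (hg : Measurable g) (h : γ.map g = μ) (hφ : Integrable φ μ) :
    Integrable (fun x => φ (g x)) γ :=
  (h ▸ hφ).comp_measurable hg

end Marginals

section Wasserstein

variable {α : Type*} [MeasurableSpace α] {d : α → α → ℝ} {μ μ' : Measure α}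

lemma W2_le_of_coupling {γ : Measure (α × α)} [IsProbabilityMeasure γ]
    (h₁ : γ.map Prod.fst = μ) (h₂ : γ.map Prod.snd = μ') :
    W2 d μ μ' ≤ √(∫ p, d p.1 p.2 ^ 2 ∂γ) :=
  csInf_le ⟨0, by rintro _ ⟨_, _, _, _, rfl⟩; exact Real.sqrt_nonneg _⟩
    ⟨γ, inferInstance, h₁, h₂, rfl⟩

lemma le_mul_W2 [IsProbabilityMeasure μ] [IsProbabilityMeasure μ'] {a c : ℝ} (hc : 0 ≤ c)
    (h : ∀ γ : Measure (α × α), IsProbabilityMeasure γ → γ.map Prod.fst = μ →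
      γ.map Prod.snd = μ' → a ≤ c * √(∫ p, d p.1 p.2 ^ 2 ∂γ)) :
    a ≤ c * W2 d μ μ' := by
  rw [W2, ← smul_eq_mul, ← Real.sInf_smul_of_nonneg hc]
  refine le_csInf (Set.Nonempty.smul_set ⟨_, μ.prod μ', inferInstance, by simp, by simp, rfl⟩) ?_
  rintro _ ⟨_, ⟨γ, hγ, h₁, h₂, rfl⟩, rfl⟩
  exact h γ hγ h₁ h₂

end Wasserstein

lemma csInf_image_le_csInf_image_add {ι : Type*} {s : Set ι} {f g : ι → ℝ} {δ : ℝ}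
    (hs : s.Nonempty) (hf : BddBelow (f '' s)) (h : ∀ i ∈ s, f i ≤ g i + δ) :
    sInf (f '' s) ≤ sInf (g '' s) + δ := by
  rw [← sub_le_iff_le_add]
  refine le_csInf (hs.image g) ?_
  rintro _ ⟨i, hi, rfl⟩
  linarith [csInf_le hf (Set.mem_image_of_mem f hi), h i hi]

lemma abs_csInf_image_sub_csInf_image_le {ι : Type*} {s : Set ι} {f g : ι → ℝ} {δ : ℝ}
    (hs : s.Nonempty) (hf : BddBelow (f '' s)) (hg : BddBelow (g '' s))
    (h : ∀ i ∈ s, |f i - g i| ≤ δ) : |sInf (f '' s) - sInf (g '' s)| ≤ δ := by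
  have h₁ := csInf_image_le_csInf_image_add (g := g) (δ := δ) hs hf fun i hi => by
    linarith [abs_le.1 (h i hi)]
  have h₂ := csInf_image_le_csInf_image_add (g := f) (δ := δ) hs hg fun i hi => by
    linarith [abs_le.1 (h i hi)]
  exact abs_le.2 ⟨by linarith, by linarith⟩

section Empirical

variable {α : Type*} [MeasurableSpace α]

lemma isProbabilityMeasure_empirical {N : ℕ} (hN : 0 < N) (θs : Fin N → α) :
    IsProbabilityMeasure ((N : ℝ≥0∞)⁻¹ • ∑ i, Measure.dirac (θs i)) :=
  ⟨by simp [ENNReal.inv_mul_cancel, hN.ne']⟩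

lemma integrable_empirical [MeasurableSingletonClass α] {N : ℕ} (hN : 0 < N) (θs : Fin N → α)
    (φ : α → ℝ) :
    Integrable φ ((N : ℝ≥0∞)⁻¹ • ∑ i, Measure.dirac (θs i)) :=
  (integrable_finsetSum_measure.2 fun _ _ => integrable_dirac enorm_lt_top).smul_measure
    (by simp [hN.ne'])

end Empirical

section ProductSpace

variable {X Θ Y : Type*} [NormedAddCommGroup X] [NormedAddCommGroup Θ] [NormedAddCommGroup Y]

lemma nU_eq_norm_toLp (u : X × Θ) : nU u = ‖WithLp.toLp 2 u‖ := by
  rw [WithLp.prod_norm_eq_of_L2]; rfl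

lemma nU_nonneg (u : X × Θ) : 0 ≤ nU u := Real.sqrt_nonneg _

lemma nU_sq (u : X × Θ) : nU u ^ 2 = ‖u.1‖ ^ 2 + ‖u.2‖ ^ 2 :=
  Real.sq_sqrt (by positivity)

lemma nU_sub_of_fst_eq (x : X) (a b : Θ) : nU ((x, a) - (x, b)) = ‖a - b‖ := by
  simp [nU]

lemma continuous_nU : Continuous (nU : X × Θ → ℝ) := by
  rw [show (nU : X × Θ → ℝ) = _ from funext nU_eq_norm_toLp]
  exact continuous_norm.comp (WithLp.prod_continuous_toLp 2 X Θ)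

lemma norm_sub_comp_ofLp_sub_le {F E : X × Θ → Y} {L R B : ℝ}
    (hF : ∀ u v, ‖F u - F v‖ ≤ L * nU (u - v)) (hE : E ∈ Hclass R B)
    (v w : WithLp 2 (X × Θ)) :
    ‖(F v.ofLp - E v.ofLp) - (F w.ofLp - E w.ofLp)‖ ≤ (L + R) * ‖v - w‖ := by
  have hnorm : nU (v.ofLp - w.ofLp) = ‖v - w‖ := by
    rw [nU_eq_norm_toLp, WithLp.toLp_sub, WithLp.toLp_ofLp, WithLp.toLp_ofLp]
  calc ‖(F v.ofLp - E v.ofLp) - (F w.ofLp - E w.ofLp)‖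
      = ‖(F v.ofLp - F w.ofLp) - (E v.ofLp - E w.ofLp)‖ := by abel_nf
    _ ≤ L * ‖v - w‖ + R * ‖v - w‖ :=
        (norm_sub_le _ _).trans (hnorm ▸ add_le_add (hF _ _) (hE.1 _ _))
    _ = (L + R) * ‖v - w‖ := by ring

variable [MeasurableSpace X] [MeasurableSpace Θ]

lemma cShift_nonneg {L R B : ℝ} (hL : 0 ≤ L) (hR : 0 ≤ R) (hB : 0 ≤ B) (F : X × Θ → Y)
    (μ μ' : Measure (X × Θ)) : 0 ≤ cShift L R B F μ μ' := by
  unfold cShift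
  positivity

lemma integrable_nU_sq_prod {ρ : Measure X} [IsProbabilityMeasure ρ] {π : Measure Θ}
    [IsProbabilityMeasure π]
    (hρ : Integrable (fun x => ‖x‖ ^ 2) ρ) (hπ : Integrable (fun a => ‖a‖ ^ 2) π) :
    Integrable (fun u => nU u ^ 2) (ρ.prod π) := by
  simp only [nU_sq]
  exact (hρ.comp_fst π).add (hπ.comp_snd ρ)

variable [SecondCountableTopology X] [BorelSpace X] [SecondCountableTopology Θ] [BorelSpace Θ]

lemma abs_risk_sub_risk_le {F E : X × Θ → Y} {L R B : ℝ} (hL : 0 ≤ L) (hR : 0 ≤ R)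
    (hF : ∀ u v, ‖F u - F v‖ ≤ L * nU (u - v)) (hE : E ∈ Hclass R B)
    {μ μ' : Measure (X × Θ)} [IsProbabilityMeasure μ] [IsProbabilityMeasure μ']
    (hμ : Integrable (fun u => nU u ^ 2) μ) (hμ' : Integrable (fun u => nU u ^ 2) μ') :
    |risk F E μ' - risk F E μ| ≤ cShift L R B F μ μ' * W2 (fun u v => nU (u - v)) μ μ' := by
  have hB : 0 ≤ B := (norm_nonneg _).trans hE.2
  refine le_mul_W2 (cShift_nonneg hL hR hB F μ μ') fun γ _ h₁ h₂ => ?_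
  -- on `WithLp 2 (X × Θ)` the norm is `nU`, so the estimate for Lipschitz maps applies
  have hf := norm_sub_comp_ofLp_sub_le hF hE
  have h0 : ‖F (0 : WithLp 2 (X × Θ)).ofLp - E (0 : WithLp 2 (X × Θ)).ofLp‖ ≤ ‖F 0‖ + B := by
    simpa only [WithLp.ofLp_zero] using
      (norm_sub_le (F 0) (E 0)).trans (add_le_add le_rfl hE.2)
  have hmarg : ∀ {g : (X × Θ) × (X × Θ) → X × Θ} {m : Measure (X × Θ)}, Measurable g →
      γ.map g = m → Integrable (fun u => nU u ^ 2) m →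
      MemLp (fun p => WithLp.toLp 2 (g p)) 2 γ := fun hg h hm =>
    (memLp_two_iff_integrable_sq_norm
      ((WithLp.prod_continuous_toLp 2 X Θ).comp_aestronglyMeasurable
        hg.aestronglyMeasurable)).2
      (by simpa only [nU_eq_norm_toLp] using integrable_comp_of_map_eq hg h hm)
  have key := abs_integral_norm_sq_comp_sub_le hf h0 (by positivity)
    (hmarg measurable_fst h₁ hμ) (hmarg measurable_snd h₂ hμ')
  have hφ : Continuous fun u => ‖F u - E u‖ ^ 2 :=
    ((continuous_of_norm_sub_le hf).comp (WithLp.prod_continuous_toLp 2 X Θ)).norm.pow 2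
  have r₁ : ∫ p, ‖F p.1 - E p.1‖ ^ 2 ∂γ = risk F E μ :=
    integral_comp_of_map_eq measurable_fst h₁ hφ.aestronglyMeasurable
  have r₂ : ∫ p, ‖F p.2 - E p.2‖ ^ 2 ∂γ = risk F E μ' :=
    integral_comp_of_map_eq measurable_snd h₂ hφ.aestronglyMeasurable
  have m₁ : ∫ p, nU p.1 ^ 2 ∂γ = ∫ u, nU u ^ 2 ∂μ :=
    integral_comp_of_map_eq measurable_fst h₁ (continuous_nU.pow 2).aestronglyMeasurable
  have m₂ : ∫ p, nU p.2 ^ 2 ∂γ = ∫ u, nU u ^ 2 ∂μ' :=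
    integral_comp_of_map_eq measurable_snd h₂ (continuous_nU.pow 2).aestronglyMeasurable
  simp only [WithLp.ofLp_toLp, ← WithLp.toLp_sub, ← nU_eq_norm_toLp] at key
  rwa [r₁, r₂, m₁, m₂] at key

lemma W2_prod_le (ρ : Measure X) [IsProbabilityMeasure ρ] (π₁ π₂ : Measure Θ)
    [IsProbabilityMeasure π₁] [IsProbabilityMeasure π₂] :
    W2 (fun u v : X × Θ => nU (u - v)) (ρ.prod π₁) (ρ.prod π₂) ≤
      W2 (fun a b : Θ => ‖a - b‖) π₁ π₂ := by
  refine le_csInf ⟨_, π₁.prod π₂, inferInstance, by simp, by simp, rfl⟩ ?_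
  rintro _ ⟨γ, _, h₁, h₂, rfl⟩
  -- both copies of `X` are coupled along the diagonal
  let T : X × (Θ × Θ) → (X × Θ) × (X × Θ) := fun q => ((q.1, q.2.1), (q.1, q.2.2))
  have hT : Measurable T := by fun_prop
  have : IsProbabilityMeasure ((ρ.prod γ).map T) :=
    Measure.isProbabilityMeasure_map hT.aemeasurable
  refine (W2_le_of_coupling (γ := (ρ.prod γ).map T) ?_ ?_).trans_eq ?_
  · rw [Measure.map_map measurable_fst hT, ← h₁, ← Measure.map_id (μ := ρ),
      Measure.map_prod_map _ _ measurable_id measurable_fst, Measure.map_id]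
    rfl
  · rw [Measure.map_map measurable_snd hT, ← h₂, ← Measure.map_id (μ := ρ),
      Measure.map_prod_map _ _ measurable_id measurable_snd, Measure.map_id]
    rfl
  · congr 1
    rw [integral_map (f := fun p : (X × Θ) × (X × Θ) => nU (p.1 - p.2) ^ 2) hT.aemeasurable
      ((continuous_nU.comp (continuous_fst.sub continuous_snd)).pow 2).aestronglyMeasurable]
    simp only [T, nU_sub_of_fst_eq]
    rw [integral_fun_snd (fun p : Θ × Θ => ‖p.1 - p.2‖ ^ 2)]
    simp

end ProductSpace

/-- **Theorem, finite-chain approximation: quantitative bound.**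
With deployment law `ν = ρ ⊗ π` and empirical training law `ν̂_N = ρ ⊗ π̂_N`,
`0 ≤ J_ν(ν̂_N) − inf_{E∈H} R_ν(E) ≤ 2 c(ν̂_N, ν) W₂(π̂_N, π)`. -/
theorem finite_chain_bound (F : X × Θ → Y) (L R B : ℝ)
    (hL : 0 ≤ L) (hR : 0 ≤ R) (hB : 0 ≤ B)
    (hF : ∀ u v : X × Θ, ‖F u - F v‖ ≤ L * nU (u - v))
    (ρ : Measure X) [IsProbabilityMeasure ρ] (hρ : Integrable (fun x => ‖x‖ ^ 2) ρ)
    (π : Measure Θ) [IsProbabilityMeasure π] (hπ : Integrable (fun a => ‖a‖ ^ 2) π)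
    (ν : Measure (X × Θ)) (hν : ν = ρ.prod π)
    (N : ℕ) (hN : 0 < N) (θs : Fin N → Θ)
    (πhat : Measure Θ) (hπhat : πhat = (N : ℝ≥0∞)⁻¹ • ∑ i, Measure.dirac (θs i))
    (νhat : Measure (X × Θ)) (hνhat : νhat = ρ.prod πhat) :
    0 ≤ Jobj L R B F ν νhat - sInf ((fun E => risk F E ν) '' (Hclass R B : Set (X × Θ → Y))) ∧
      Jobj L R B F ν νhat - sInf ((fun E => risk F E ν) '' (Hclass R B : Set (X × Θ → Y)))
        ≤ 2 * cShift L R B F νhat ν * W2 (fun a b : Θ => ‖a - b‖) πhat π := by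
  subst hν hνhat
  have : IsProbabilityMeasure πhat := hπhat ▸ isProbabilityMeasure_empirical hN θs
  have hM := integrable_nU_sq_prod hρ hπ
  have hMhat := integrable_nU_sq_prod hρ (hπhat ▸ integrable_empirical hN θs _)
  have h0 : (0 : X × Θ → Y) ∈ Hclass R B :=
    ⟨fun u v => by simpa using mul_nonneg hR (nU_nonneg _), by simpa using hB⟩
  have hbdd : ∀ μ, BddBelow ((fun E => risk F E μ) '' Hclass R B) := fun μ =>
    ⟨0, by rintro _ ⟨E, -, rfl⟩; exact integral_nonneg fun u => by positivity⟩
  have hinf := abs_csInf_image_sub_csInf_image_le ⟨0, h0⟩ (hbdd (ρ.prod π))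
    (hbdd (ρ.prod πhat)) fun E hE => abs_risk_sub_risk_le hL hR hF hE hMhat hM
  have hW := mul_le_mul_of_nonneg_left (W2_prod_le ρ πhat π)
    (cShift_nonneg hL hR hB F (ρ.prod πhat) (ρ.prod π))
  unfold Jobj
  constructor <;> linarith [abs_le.1 hinf]
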